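/- Let a, b, c, λ ∈ ℝ, λ ≠ 0, and consider the 3-form T = e₅∧Ω₁ + e₆∧Ω₂ on ℝ⁶ with Ω₁ = λ(e₁∧e₂ + e₃∧e₄), Ω₂ = λ(e₁∧e₂ - e₃∧e₄), and the symmetric operator R = (a/λ²)Ω₁⊙Ω₁ + (2c/λ²)Ω₁⊙Ω₂ + (b/λ²)Ω₂⊙Ω₂ on Λ²ℝ⁶ (so with α = β = λ). There, more generally with Ω₁ = α(e₁∧e₂+e₃∧e₄), Ω₂ = β(e₁∧e₂−e₃∧e₄), αβ ≠ 0, the first Bianchi condition Σ_cyclic ⟨R(X∧Y)Z,W⟩ = σ_T(X,Y,Z,W) is satisfied if and only if α² − β² − a + b = 0. -/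
import Mathlib


/- STATEMENT 16: On ℝ⁶ let T = e₅∧Ω₁ + e₆∧Ω₂ with Ω₁ = α(e₁∧e₂ + e₃∧e₄),
Ω₂ = β(e₁∧e₂ − e₃∧e₄), αβ ≠ 0, and let R = (a/α²)Ω₁⊙Ω₁ + (2c/(αβ))Ω₁⊙Ω₂ + (b/β²)Ω₂⊙Ω₂
be the corresponding symmetric operator on Λ²ℝ⁶. Then the first Bianchi condition
Σ_cyclic{X,Y,Z} ⟨R(X∧Y)Z, W⟩ = σ_T(X,Y,Z,W) holds if and only if α² − β² − a + b = 0.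

⊙ is the symmetric product of 2-forms, (ω⊙η)(γ) = (⟨ω,γ⟩η + ⟨η,γ⟩ω)/2 (so ω⊙ω = ω⊗ω),
with the inner product on Λ² making the e_i∧e_j (i<j) orthonormal; 2-forms are identified
with skew endomorphisms via ⟨A_ω Z, W⟩ = ω(Z,W).
σ_T(X,Y,Z,W) = Σ_cyclic{X,Y,Z} ⟨T(X,Y), T(Z,W)⟩ (= (α²−β²)(e₁∧e₂∧e₃∧e₄)(X,Y,Z,W)).
Indices 0-based in ℝ⁶ = Fin 6 → ℝ. -/

noncomputable section

def d3 (i j k : Fin 6) (X Y Z : Fin 6 → ℝ) : ℝ :=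
  Matrix.det (Matrix.of fun p q => ![X, Y, Z] p (![i, j, k] q))

/-- the 2-form Ω₁ = α(e₁∧e₂ + e₃∧e₄) -/
def om1 (al : ℝ) (X Y : Fin 6 → ℝ) : ℝ :=
  al * ((X 0 * Y 1 - X 1 * Y 0) + (X 2 * Y 3 - X 3 * Y 2))

/-- the 2-form Ω₂ = β(e₁∧e₂ − e₃∧e₄) -/
def om2 (be : ℝ) (X Y : Fin 6 → ℝ) : ℝ :=
  be * ((X 0 * Y 1 - X 1 * Y 0) - (X 2 * Y 3 - X 3 * Y 2))

/-- T = e₅∧Ω₁ + e₆∧Ω₂ = α(e₁∧e₂+e₃∧e₄)∧e₅ + β(e₁∧e₂−e₃∧e₄)∧e₆ -/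
def Tq (al be : ℝ) (X Y Z : Fin 6 → ℝ) : ℝ :=
  al * (d3 0 1 4 X Y Z + d3 2 3 4 X Y Z) + be * (d3 0 1 5 X Y Z - d3 2 3 5 X Y Z)

/-- ⟨R(X∧Y)Z, W⟩ for R = (a/α²)Ω₁⊙Ω₁ + (2c/(αβ))Ω₁⊙Ω₂ + (b/β²)Ω₂⊙Ω₂.
Note ⟨Ω_i, X∧Y⟩ = Ω_i(X,Y) and (ω⊙η)(X∧Y) = (⟨ω,X∧Y⟩η + ⟨η,X∧Y⟩ω)/2 as a 2-form,
evaluated at (Z,W). -/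
def Rq (al be a b c : ℝ) (X Y Z W : Fin 6 → ℝ) : ℝ :=
  (a / al ^ 2) * (om1 al X Y * om1 al Z W)
    + (2 * c / (al * be)) * ((om1 al X Y * om2 be Z W + om2 be X Y * om1 al Z W) / 2)
    + (b / be ^ 2) * (om2 be X Y * om2 be Z W)

/-- σ_T(X,Y,Z,W) = Σ_cyclic{X,Y,Z} ⟨T(X,Y), T(Z,W)⟩ -/
def sigmaq (al be : ℝ) (X Y Z W : Fin 6 → ℝ) : ℝ :=
  ∑ m : Fin 6,
    (Tq al be X Y (Pi.single m 1) * Tq al be Z W (Pi.single m 1)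
      + Tq al be Y Z (Pi.single m 1) * Tq al be X W (Pi.single m 1)
      + Tq al be Z X (Pi.single m 1) * Tq al be Y W (Pi.single m 1))

lemma Tq_e0 (al be : ℝ) (X Y : Fin 6 → ℝ) :
    Tq al be X Y (Pi.single 0 1) = X 1*Y 4*al + X 1*Y 5*be - X 4*Y 1*al - X 5*Y 1*be := by
  simp [Tq, d3, Matrix.det_fin_three, Pi.single_apply]; ring

lemma Tq_e1 (al be : ℝ) (X Y : Fin 6 → ℝ) :
    Tq al be X Y (Pi.single 1 1) = -X 0*Y 4*al - X 0*Y 5*be + X 4*Y 0*al + X 5*Y 0*be := by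
  simp [Tq, d3, Matrix.det_fin_three, Pi.single_apply]; ring

lemma Tq_e2 (al be : ℝ) (X Y : Fin 6 → ℝ) :
    Tq al be X Y (Pi.single 2 1) = X 3*Y 4*al - X 3*Y 5*be - X 4*Y 3*al + X 5*Y 3*be := by
  simp [Tq, d3, Matrix.det_fin_three, Pi.single_apply]; ring

lemma Tq_e3 (al be : ℝ) (X Y : Fin 6 → ℝ) :
    Tq al be X Y (Pi.single 3 1) = -X 2*Y 4*al + X 2*Y 5*be + X 4*Y 2*al - X 5*Y 2*be := by
  simp [Tq, d3, Matrix.det_fin_three, Pi.single_apply]; ring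

lemma Tq_e4 (al be : ℝ) (X Y : Fin 6 → ℝ) :
    Tq al be X Y (Pi.single 4 1) = X 0*Y 1*al - X 1*Y 0*al + X 2*Y 3*al - X 3*Y 2*al := by
  simp [Tq, d3, Matrix.det_fin_three, Pi.single_apply]; ring

lemma Tq_e5 (al be : ℝ) (X Y : Fin 6 → ℝ) :
    Tq al be X Y (Pi.single 5 1) = X 0*Y 1*be - X 1*Y 0*be - X 2*Y 3*be + X 3*Y 2*be := by
  simp [Tq, d3, Matrix.det_fin_three, Pi.single_apply]; ring

/-- p = Ω ₁/α evaluated -/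
def pq (X Y : Fin 6 → ℝ) : ℝ := X 0*Y 1 - X 1*Y 0 + X 2*Y 3 - X 3*Y 2
def qq (X Y : Fin 6 → ℝ) : ℝ := X 0*Y 1 - X 1*Y 0 - (X 2*Y 3 - X 3*Y 2)

lemma Rq_eq (al be a b c : ℝ) (hal : al ≠ 0) (hbe : be ≠ 0) (X Y Z W : Fin 6 → ℝ) :
    Rq al be a b c X Y Z W
      = a * (pq X Y * pq Z W) + c * (pq X Y * qq Z W + qq X Y * pq Z W)
        + b * (qq X Y * qq Z W) := by
  simp only [Rq, om1, om2, pq, qq]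
  field_simp
  ring

lemma main_identity (al be a b c : ℝ) (hal : al ≠ 0) (hbe : be ≠ 0)
    (X Y Z W : Fin 6 → ℝ) :
    Rq al be a b c X Y Z W + Rq al be a b c Y Z X W + Rq al be a b c Z X Y W
        - sigmaq al be X Y Z W
      = (a - b - al ^ 2 + be ^ 2) *
          (X 0 * (Y 1 * (Z 2 * W 3 - Z 3 * W 2) - Y 2 * (Z 1 * W 3 - Z 3 * W 1)
              + Y 3 * (Z 1 * W 2 - Z 2 * W 1))
            - X 1 * (Y 0 * (Z 2 * W 3 - Z 3 * W 2) - Y 2 * (Z 0 * W 3 - Z 3 * W 0)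
              + Y 3 * (Z 0 * W 2 - Z 2 * W 0))
            + X 2 * (Y 0 * (Z 1 * W 3 - Z 3 * W 1) - Y 1 * (Z 0 * W 3 - Z 3 * W 0)
              + Y 3 * (Z 0 * W 1 - Z 1 * W 0))
            - X 3 * (Y 0 * (Z 1 * W 2 - Z 2 * W 1) - Y 1 * (Z 0 * W 2 - Z 2 * W 0)
              + Y 2 * (Z 0 * W 1 - Z 1 * W 0))) := by
  rw [Rq_eq al be a b c hal hbe, Rq_eq al be a b c hal hbe, Rq_eq al be a b c hal hbe]
  simp only [sigmaq, Fin.sum_univ_six, Tq_e0, Tq_e1, Tq_e2, Tq_e3, Tq_e4, Tq_e5, pq, qq]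
  ring

theorem first_bianchi_dim_six_rank_two (al be a b c : ℝ) (h : al * be ≠ 0) :
    (∀ X Y Z W : Fin 6 → ℝ,
        Rq al be a b c X Y Z W + Rq al be a b c Y Z X W + Rq al be a b c Z X Y W
          = sigmaq al be X Y Z W)
      ↔ al ^ 2 - be ^ 2 - a + b = 0 := by
  have hal : al ≠ 0 := fun hh => h (by rw [hh]; ring)
  have hbe : be ≠ 0 := fun hh => h (by rw [hh]; ring)
  constructor
  · intro H
    have key := main_identity al be a b c hal hbe
      (Pi.single 0 1) (Pi.single 1 1) (Pi.single 2 1) (Pi.single 3 1)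
    rw [H] at key
    simp [Pi.single_apply] at key
    linarith
  · intro hb X Y Z W
    have key := main_identity al be a b c hal hbe X Y Z W
    have : a - b - al ^ 2 + be ^ 2 = 0 := by linarith
    rw [this] at key
    linarith

end
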